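/- Let (X_1,…,X_n) be an exchangeable random vector with order statistics (Y_1,…,Y_n), and let g : ℝ^n → ℝ be Borel measurable with E|g(X_1,…,X_n)| < ∞. Then for every event A in the σ-field σ(Y_1,…,Y_n), one has ∫_A g(X_1,…,X_n) dP = (1/n!) Σ_π ∫_A g(Y_{π(1)},…,Y_{π(n)}) dP, where the sum runs over all n! permutations π of {1,…,n}. -/

import Mathlib

open MeasureTheory

/-- The sorting map: rearranges the coordinates of `x : Fin n → ℝ` in nondecreasing order. -/
noncomputable def sortVec {n : ℕ} (x : Fin n → ℝ) : Fin n → ℝ :=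
  x ∘ Tuple.sort x

/-! Exchangeability makes each `X ∘ τ` identically distributed with `X`, and the order statistics
`Y = sortVec ∘ X` are invariant under `X ↦ X ∘ τ`, so `∫_A g (X ∘ τ) = ∫_A g X` for `A ∈ σ(Y)`.
Summing over `τ`, it remains to see that `∑_τ g (X ω ∘ τ) = ∑_π g (Y ω ∘ π)` pointwise: since
`Y ω = X ω ∘ Tuple.sort (X ω)`, this is a reindexing by left multiplication. -/

open ProbabilityTheory

theorem measurable_comp_right {ι κ β : Type*} [MeasurableSpace β] (e : κ → ι) :
    Measurable fun x : ι → β => x ∘ e :=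
  measurable_pi_lambda _ fun i => measurable_pi_apply (e i)

section

variable {α : Type*} [LinearOrder α] [TopologicalSpace α] [OrderClosedTopology α]
  [SecondCountableTopology α] [MeasurableSpace α] [OpensMeasurableSpace α] {n : ℕ}

theorem measurableSet_setOf_sort_eq (σ : Equiv.Perm (Fin n)) :
    MeasurableSet {x : Fin n → α | Tuple.sort x = σ} := by
  simp_rw [eq_comm (a := Tuple.sort _), Tuple.eq_sort_iff, Monotone, Function.comp_apply,
    le_antisymm_iff]
  exact measurableSet_setOfPred.2 (by fun_prop)

theorem measurable_comp_sort : Measurable fun x : Fin n → α => x ∘ Tuple.sort x := by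
  let _ : MeasurableSpace (Equiv.Perm (Fin n)) := ⊤
  have : DiscreteMeasurableSpace (Equiv.Perm (Fin n)) := ⟨fun _ => trivial⟩
  have hsort : Measurable fun x : Fin n → α => Tuple.sort x :=
    measurable_to_countable' fun σ => measurableSet_setOf_sort_eq σ
  have hcomp : Measurable fun p : (Fin n → α) × Equiv.Perm (Fin n) => p.1 ∘ p.2 :=
    measurable_from_prod_countable_left fun σ => measurable_comp_right σ
  exact hcomp.comp (measurable_id.prodMk hsort)

end

section

variable {n : ℕ}

theorem measurable_sortVec : Measurable (sortVec (n := n)) :=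
  measurable_comp_sort

theorem sortVec_comp_perm (x : Fin n → ℝ) (τ : Equiv.Perm (Fin n)) :
    sortVec (x ∘ τ) = sortVec x :=
  Tuple.comp_perm_comp_sort_eq_comp_sort

theorem sum_perm_comp_sortVec {M : Type*} [AddCommMonoid M] (f : (Fin n → ℝ) → M)
    (x : Fin n → ℝ) :
    ∑ π : Equiv.Perm (Fin n), f (sortVec x ∘ π) = ∑ π : Equiv.Perm (Fin n), f (x ∘ π) :=
  Equiv.sum_comp (Equiv.mulLeft (Tuple.sort x)) fun π => f (x ∘ π)

theorem abs_comp_sortVec_comp_perm_le_sum (g : (Fin n → ℝ) → ℝ) (x : Fin n → ℝ)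
    (π : Equiv.Perm (Fin n)) :
    |g (sortVec x ∘ π)| ≤ ∑ τ : Equiv.Perm (Fin n), |g (x ∘ τ)| :=
  Finset.single_le_sum (f := fun τ : Equiv.Perm (Fin n) => |g (x ∘ τ)|)
    (fun _ _ => abs_nonneg _) (Finset.mem_univ (Tuple.sort x * π))

end

section

variable {Ω : Type*} [MeasurableSpace Ω] {P : Measure Ω}

theorem ProbabilityTheory.IdentDistrib.setIntegral_comp_eq_on_comap
    {E F : Type*} [MeasurableSpace E] [MeasurableSpace F] {X X' : Ω → E}
    (h : IdentDistrib X' X P P) {S : E → F} (hS : Measurable S)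
    (hSX : ∀ ω, S (X' ω) = S (X ω)) {g : E → ℝ} (hg : AEStronglyMeasurable g (P.map X))
    {A : Set Ω} (hA : MeasurableSet[MeasurableSpace.comap (fun ω => S (X ω)) inferInstance] A) :
    ∫ ω in A, g (X' ω) ∂P = ∫ ω in A, g (X ω) ∂P := by
  obtain ⟨B, hB, rfl⟩ := hA
  have hpre : (fun ω => S (X ω)) ⁻¹' B = X' ⁻¹' (S ⁻¹' B) := by
    ext ω; simp [hSX]
  calc ∫ ω in (fun ω => S (X ω)) ⁻¹' B, g (X' ω) ∂P
      = ∫ ω in X' ⁻¹' (S ⁻¹' B), g (X' ω) ∂P := by rw [hpre]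
    _ = ∫ y in S ⁻¹' B, g y ∂(P.map X') :=
      (setIntegral_map (hS hB) (h.map_eq ▸ hg) h.aemeasurable_fst).symm
    _ = ∫ y in S ⁻¹' B, g y ∂(P.map X) := by rw [h.map_eq]
    _ = ∫ ω in X ⁻¹' (S ⁻¹' B), g (X ω) ∂P :=
      setIntegral_map (hS hB) hg h.aemeasurable_snd

theorem integrable_comp_sortVec_comp_perm {n : ℕ} {X : Ω → Fin n → ℝ} (hX : Measurable X)
    {g : (Fin n → ℝ) → ℝ} (hg : Measurable g)
    (hint : ∀ τ : Equiv.Perm (Fin n), Integrable (fun ω => g (X ω ∘ τ)) P)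
    (π : Equiv.Perm (Fin n)) : Integrable (fun ω => g (sortVec (X ω) ∘ π)) P := by
  have hmeas : Measurable fun ω => g (sortVec (X ω) ∘ π) :=
    hg.comp ((measurable_comp_right π).comp (measurable_sortVec.comp hX))
  exact Integrable.mono' (integrable_finsetSum Finset.univ fun τ _ => (hint τ).abs)
    hmeas.aestronglyMeasurable
    (Filter.Eventually.of_forall fun ω => abs_comp_sortVec_comp_perm_le_sum g (X ω) π)

end

theorem setIntegral_of_exchangeable_over_order_statistics_event_general
    {Ω : Type*} [MeasurableSpace Ω] (P : Measure Ω)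
    {n : ℕ} (X : Ω → Fin n → ℝ) (hX : Measurable X)
    (hexch : ∀ π : Equiv.Perm (Fin n),
      Measure.map (fun ω => X ω ∘ ⇑π) P = Measure.map X P)
    (g : (Fin n → ℝ) → ℝ) (hg : Measurable g)
    (hint : Integrable (fun ω => g (X ω)) P)
    (A : Set Ω)
    (hA : MeasurableSet[MeasurableSpace.comap (fun ω => sortVec (X ω)) inferInstance] A) :
    ∫ ω in A, g (X ω) ∂P =
      ((n.factorial : ℝ))⁻¹ *
        ∑ π : Equiv.Perm (Fin n), ∫ ω in A, g (sortVec (X ω) ∘ ⇑π) ∂P := by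
  have hident (τ : Equiv.Perm (Fin n)) : IdentDistrib (fun ω => X ω ∘ τ) X P P :=
    ⟨((measurable_comp_right τ).comp hX).aemeasurable, hX.aemeasurable, hexch τ⟩
  have hint_perm (τ : Equiv.Perm (Fin n)) : Integrable (fun ω => g (X ω ∘ τ)) P :=
    ((hident τ).comp hg).integrable_iff.2 hint
  have hsum : ∑ π : Equiv.Perm (Fin n), ∫ ω in A, g (sortVec (X ω) ∘ π) ∂P =
      n.factorial * ∫ ω in A, g (X ω) ∂P := calc
    _ = ∫ ω in A, ∑ π : Equiv.Perm (Fin n), g (sortVec (X ω) ∘ π) ∂P :=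
      (integral_finsetSum _ fun π _ =>
        (integrable_comp_sortVec_comp_perm hX hg hint_perm π).restrict).symm
    _ = ∫ ω in A, ∑ τ : Equiv.Perm (Fin n), g (X ω ∘ τ) ∂P := by
      simp_rw [sum_perm_comp_sortVec]
    _ = ∑ τ : Equiv.Perm (Fin n), ∫ ω in A, g (X ω ∘ τ) ∂P :=
      integral_finsetSum _ fun τ _ => (hint_perm τ).restrict
    _ = ∑ τ : Equiv.Perm (Fin n), ∫ ω in A, g (X ω) ∂P := by
      refine Finset.sum_congr rfl fun τ _ => ?_
      exact (hident τ).setIntegral_comp_eq_on_comap measurable_sortVec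
        (fun ω => sortVec_comp_perm (X ω) τ) hg.aestronglyMeasurable hA
    _ = n.factorial * ∫ ω in A, g (X ω) ∂P := by
      simp [Finset.card_univ, Fintype.card_perm]
  rw [hsum, inv_mul_cancel_left₀ (by positivity)]

/-- If `X = (X_1,…,X_n)` is exchangeable with order statistics `Y = sortVec ∘ X` and
`g` is Borel with `E|g(X)| < ∞`, then for every `A ∈ σ(Y)`,
`∫_A g(X) dP = (1/n!) ∑_π ∫_A g(Y_{π(1)},…,Y_{π(n)}) dP`. -/
theorem setIntegral_of_exchangeable_over_order_statistics_event
    {Ω : Type*} [MeasurableSpace Ω] (P : Measure Ω) [IsProbabilityMeasure P]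
    {n : ℕ} (X : Ω → Fin n → ℝ) (hX : Measurable X)
    (hexch : ∀ π : Equiv.Perm (Fin n),
      Measure.map (fun ω => X ω ∘ ⇑π) P = Measure.map X P)
    (g : (Fin n → ℝ) → ℝ) (hg : Measurable g)
    (hint : Integrable (fun ω => g (X ω)) P)
    (A : Set Ω)
    (hA : MeasurableSet[MeasurableSpace.comap (fun ω => sortVec (X ω)) inferInstance] A) :
    ∫ ω in A, g (X ω) ∂P =
      ((n.factorial : ℝ))⁻¹ *
        ∑ π : Equiv.Perm (Fin n), ∫ ω in A, g (sortVec (X ω) ∘ ⇑π) ∂P :=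
  setIntegral_of_exchangeable_over_order_statistics_event_general P X hX hexch g hg hint A hA
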